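/- arXiv:2005.09838 — 5 statements merged into one kernel-verified Lean document; each statement's English description precedes it below -/
import Mathlib

section
/- Let m1, m2, m3, r be positive integers, let X_1, …, X_{m3} be real m1×r matrices, Y_1, …, Y_{m3} be real r×m2 matrices, and W_1, …, W_{m3} be real m1×m2 matrices. Define Z_k = Σ_{l=1}^{m3} X_{((k−l) mod m3)+1} Y_l for k ∈ {1,…,m3} (the frontal slices of the t-product). Then Σ_{k=1}^{m3} ‖Z_k − W_k‖_F² = (1/m3) Σ_{k=1}^{m3} ‖X̃_k Ỹ_k − W̃_k‖_F², where X̃_k, Ỹ_k, W̃_k are the DFT slices of (X_k), (Y_k), (W_k) respectively. -/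
/-!
The DFT along the third mode turns the circular convolution defining the t-product into
slice-wise matrix products, and by the orthogonality relations
`∑ₖ ω^{k(l'-l)} = m3 [l = l']` it multiplies sums of squared Frobenius norms by exactly `m3`
(Parseval).
-/

open Matrix Complex BigOperators

noncomputable section

/-- The DFT slices `Ã_k = Σ_l ω^{(k-1)(l-1)} A_l` (zero-based indexing). -/
def dftSlices (m3 : ℕ) {m1 m2 : ℕ} (A : Fin m3 → Matrix (Fin m1) (Fin m2) ℂ) :
    Fin m3 → Matrix (Fin m1) (Fin m2) ℂ :=
  fun k => ∑ l : Fin m3,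
    Complex.exp (2 * Real.pi * Complex.I / m3) ^ ((k : ℕ) * (l : ℕ)) • A l

/-- The DFT slices of a family of real matrices. -/
def dftSlicesR (m3 : ℕ) {m1 m2 : ℕ} (A : Fin m3 → Matrix (Fin m1) (Fin m2) ℝ) :
    Fin m3 → Matrix (Fin m1) (Fin m2) ℂ :=
  dftSlices m3 (fun l => (A l).map (Complex.ofReal))

/-- Squared Frobenius norm of a complex matrix. -/
def frobSqC {a b : ℕ} (M : Matrix (Fin a) (Fin b) ℂ) : ℝ :=
  ∑ i, ∑ j, ‖M i j‖ ^ 2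

/-- Squared Frobenius norm of a real matrix. -/
def frobSqR {a b : ℕ} (M : Matrix (Fin a) (Fin b) ℝ) : ℝ :=
  ∑ i, ∑ j, (M i j) ^ 2

open scoped ComplexConjugate

/-- `dftSlices m3` is definitionally `finDFT (exp (2πi / m3))`. -/
def finDFT {R M : Type*} [Semiring R] [AddCommMonoid M] [Module R M] {n : ℕ} (ζ : R)
    (A : Fin n → M) (k : Fin n) : M :=
  ∑ l : Fin n, ζ ^ ((k : ℕ) * (l : ℕ)) • A l

def tProduct {R : Type*} [Semiring R] {n m r p : ℕ} (X : Fin n → Matrix (Fin m) (Fin r) R)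
    (Y : Fin n → Matrix (Fin r) (Fin p) R) (k : Fin n) : Matrix (Fin m) (Fin p) R :=
  ∑ l : Fin n, X (k - l) * Y l

section Algebraic

variable {R : Type*} [CommSemiring R] {n : ℕ} {ζ : R}

lemma pow_mul_val_add_of_pow_eq_one (hζ : ζ ^ n = 1) (k a b : Fin n) :
    ζ ^ ((k : ℕ) * ((a + b : Fin n) : ℕ)) = ζ ^ ((k : ℕ) * a) * ζ ^ ((k : ℕ) * b) := by
  rw [← pow_add, ← mul_add, pow_eq_pow_mod _ hζ, Fin.val_add, Nat.mul_mod_mod,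
    ← pow_eq_pow_mod _ hζ]

lemma finDFT_sub {M : Type*} [AddCommGroup M] [Module R M] (A B : Fin n → M) :
    finDFT ζ (A - B) = finDFT ζ A - finDFT ζ B := by
  ext k
  simp [finDFT, smul_sub, Finset.sum_sub_distrib]

lemma finDFT_tProduct [NeZero n] (hζ : ζ ^ n = 1) {m r p : ℕ}
    (X : Fin n → Matrix (Fin m) (Fin r) R) (Y : Fin n → Matrix (Fin r) (Fin p) R) (k : Fin n) :
    finDFT ζ (tProduct X Y) k = finDFT ζ X k * finDFT ζ Y k := by
  simp only [finDFT, tProduct, Finset.smul_sum, Matrix.sum_mul, Matrix.mul_sum]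
  rw [Finset.sum_comm]
  refine Finset.sum_congr rfl fun l _ => ?_
  rw [← Equiv.sum_comp (Equiv.addRight l)]
  refine Finset.sum_congr rfl fun b _ => ?_
  rw [Equiv.coe_addRight, add_sub_cancel_right, pow_mul_val_add_of_pow_eq_one hζ, mul_smul,
    Matrix.smul_mul, Matrix.mul_smul]

end Algebraic

lemma IsPrimitiveRoot.sum_fin_zpow_pow {K : Type*} [Field K] {ζ : K} {n : ℕ}
    (hζ : IsPrimitiveRoot ζ n) (d : ℤ) :
    ∑ k : Fin n, (ζ ^ d) ^ (k : ℕ) = if (n : ℤ) ∣ d then (n : K) else 0 := by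
  rw [Fin.sum_univ_eq_sum_range (fun k => (ζ ^ d) ^ k)]
  split_ifs with h
  · simp [(hζ.zpow_eq_one_iff_dvd d).2 h]
  · have hne : ζ ^ d ≠ 1 := mt (hζ.zpow_eq_one_iff_dvd d).1 h
    rw [geom_sum_eq hne, ← zpow_natCast, ← _root_.zpow_mul, mul_comm, _root_.zpow_mul,
      zpow_natCast, hζ.pow_eq_one, _root_.one_zpow, sub_self, zero_div]

lemma Complex.conj_pow_mul_pow_of_norm_eq_one {ζ : ℂ} (hζ : ‖ζ‖ = 1) (a b : ℕ) :
    conj (ζ ^ a) * ζ ^ b = ζ ^ ((b : ℤ) - a) := by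
  have hζ0 : ζ ≠ 0 := norm_ne_zero_iff.mp (hζ ▸ one_ne_zero)
  have hconj : conj ζ = ζ⁻¹ :=
    eq_inv_of_mul_eq_one_left (by rw [Complex.conj_mul', hζ]; simp)
  rw [map_pow, hconj, zpow_sub₀ hζ0, zpow_natCast, zpow_natCast, inv_pow, div_eq_mul_inv,
    mul_comm]

lemma IsPrimitiveRoot.sum_conj_pow_mul_pow {ζ : ℂ} {n : ℕ} (hζ : IsPrimitiveRoot ζ n)
    (l l' : Fin n) :
    ∑ k : Fin n, conj (ζ ^ ((k : ℕ) * l)) * ζ ^ ((k : ℕ) * l') =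
      if l = l' then (n : ℂ) else 0 := by
  have hn : n ≠ 0 := (Fin.pos l).ne'
  have hterm : ∀ k : Fin n, conj (ζ ^ ((k : ℕ) * l)) * ζ ^ ((k : ℕ) * l')
      = (ζ ^ ((l' : ℤ) - l)) ^ (k : ℕ) := fun k => by
    rw [Complex.conj_pow_mul_pow_of_norm_eq_one (hζ.norm'_eq_one hn), ← zpow_natCast,
      ← _root_.zpow_mul]
    congr 1
    push_cast
    ring
  simp only [hterm, hζ.sum_fin_zpow_pow, ← Nat.modEq_iff_dvd]
  congr 1
  exact propext ⟨fun h => Fin.ext (h.eq_of_lt_of_lt l.isLt l'.isLt), fun h => h ▸ rfl⟩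

lemma IsPrimitiveRoot.sum_norm_sq_finDFT {ζ : ℂ} {n : ℕ} (hζ : IsPrimitiveRoot ζ n)
    (f : Fin n → ℂ) : ∑ k, ‖finDFT ζ f k‖ ^ 2 = n * ∑ l, ‖f l‖ ^ 2 := by
  apply Complex.ofReal_injective
  push_cast
  simp only [← Complex.conj_mul', finDFT, smul_eq_mul, map_sum, map_mul, Finset.sum_mul_sum]
  calc _ = ∑ l : Fin n, ∑ l' : Fin n, conj (f l) * f l' *
          ∑ k : Fin n, conj (ζ ^ ((k : ℕ) * l)) * ζ ^ ((k : ℕ) * l') := by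
        simp only [Finset.mul_sum]
        rw [Finset.sum_comm]
        refine Finset.sum_congr rfl fun l _ => ?_
        rw [Finset.sum_comm]
        refine Finset.sum_congr rfl fun l' _ => Finset.sum_congr rfl fun k _ => by ring
    _ = n * ∑ l, conj (f l) * f l := by
        simp only [hζ.sum_conj_pow_mul_pow, mul_ite, mul_zero, Finset.sum_ite_eq,
          Finset.mem_univ, if_true]
        rw [← Finset.sum_mul, mul_comm]

lemma finDFT_apply_apply {R : Type*} [Semiring R] {n a b : ℕ} (ζ : R)
    (A : Fin n → Matrix (Fin a) (Fin b) R) (k : Fin n) (i : Fin a) (j : Fin b) :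
    finDFT ζ A k i j = finDFT ζ (fun l => A l i j) k := by
  simp [finDFT, Matrix.sum_apply]

lemma IsPrimitiveRoot.sum_frobSqC_finDFT {ζ : ℂ} {n a b : ℕ} (hζ : IsPrimitiveRoot ζ n)
    (A : Fin n → Matrix (Fin a) (Fin b) ℂ) :
    ∑ k, frobSqC (finDFT ζ A k) = n * ∑ k, frobSqC (A k) := by
  have hswap : ∀ F : Fin n → Fin a → Fin b → ℝ,
      ∑ k, ∑ i, ∑ j, F k i j = ∑ i, ∑ j, ∑ k, F k i j :=
    fun F => by
      rw [Finset.sum_comm]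
      exact Finset.sum_congr rfl fun i _ => Finset.sum_comm
  simp only [frobSqC, finDFT_apply_apply, hswap, Finset.mul_sum, hζ.sum_norm_sq_finDFT]

lemma frobSqC_map_ofReal {a b : ℕ} (M : Matrix (Fin a) (Fin b) ℝ) :
    frobSqC (M.map Complex.ofReal) = frobSqR M := by
  simp [frobSqC, frobSqR, Complex.norm_real]

lemma sum_frobSqC_dftSlicesR {m3 a b : ℕ} (hm3 : 0 < m3)
    (D : Fin m3 → Matrix (Fin a) (Fin b) ℝ) :
    ∑ k, frobSqC (dftSlicesR m3 D k) = m3 * ∑ k, frobSqR (D k) := by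
  simp only [← frobSqC_map_ofReal]
  exact (Complex.isPrimitiveRoot_exp m3 hm3.ne').sum_frobSqC_finDFT _

lemma dftSlicesR_tProduct_sub {m3 m1 m2 r : ℕ} (hm3 : 0 < m3)
    (X : Fin m3 → Matrix (Fin m1) (Fin r) ℝ) (Y : Fin m3 → Matrix (Fin r) (Fin m2) ℝ)
    (W : Fin m3 → Matrix (Fin m1) (Fin m2) ℝ) (k : Fin m3) :
    dftSlicesR m3 (tProduct X Y - W) k =
      dftSlicesR m3 X k * dftSlicesR m3 Y k - dftSlicesR m3 W k := by
  have : NeZero m3 := ⟨hm3.ne'⟩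
  have hpow := (Complex.isPrimitiveRoot_exp m3 hm3.ne').pow_eq_one
  have hmap : (fun l => ((tProduct X Y - W) l).map Complex.ofReal) =
      tProduct (fun l => (X l).map Complex.ofReal) (fun l => (Y l).map Complex.ofReal) -
        fun l => (W l).map Complex.ofReal := by
    ext l i j
    simp [tProduct, Matrix.sum_apply, Matrix.mul_apply]
  change finDFT _ (fun l => ((tProduct X Y - W) l).map Complex.ofReal) k = _
  rw [hmap, finDFT_sub, Pi.sub_apply, finDFT_tProduct hpow]
  rfl

theorem tProduct_fit_frobSq_dft_general (m1 m2 m3 r : ℕ)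
    (hm3 : 0 < m3)
    (X : Fin m3 → Matrix (Fin m1) (Fin r) ℝ)
    (Y : Fin m3 → Matrix (Fin r) (Fin m2) ℝ)
    (W : Fin m3 → Matrix (Fin m1) (Fin m2) ℝ) :
    ∑ k : Fin m3, frobSqR ((∑ l : Fin m3, X (k - l) * Y l) - W k) =
      (1 / (m3 : ℝ)) *
        ∑ k : Fin m3, frobSqC (dftSlicesR m3 X k * dftSlicesR m3 Y k - dftSlicesR m3 W k) := by
  have hm3R : (m3 : ℝ) ≠ 0 := Nat.cast_ne_zero.mpr hm3.ne'
  change ∑ k, frobSqR ((tProduct X Y - W) k) = _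
  simp only [← dftSlicesR_tProduct_sub hm3, sum_frobSqC_dftSlicesR hm3, one_div,
    inv_mul_cancel_left₀ hm3R]

/-- with `Z_k = Σ_l X_{(k-l) mod m3} Y_l` the t-product slices,
`Σ_k ‖Z_k − W_k‖_F² = (1/m3) Σ_k ‖X̃_k Ỹ_k − W̃_k‖_F²`. -/
theorem tProduct_fit_frobSq_dft (m1 m2 m3 r : ℕ)
    (hm1 : 0 < m1) (hm2 : 0 < m2) (hm3 : 0 < m3) (hr : 0 < r)
    (X : Fin m3 → Matrix (Fin m1) (Fin r) ℝ)
    (Y : Fin m3 → Matrix (Fin r) (Fin m2) ℝ)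
    (W : Fin m3 → Matrix (Fin m1) (Fin m2) ℝ) :
    ∑ k : Fin m3, frobSqR ((∑ l : Fin m3, X (k - l) * Y l) - W k) =
      (1 / (m3 : ℝ)) *
        ∑ k : Fin m3, frobSqC (dftSlicesR m3 X k * dftSlicesR m3 Y k - dftSlicesR m3 W k) :=
  tProduct_fit_frobSq_dft_general m1 m2 m3 r hm3 X Y W
end
end

section
/- Let A be a complex m×m positive semidefinite Hermitian matrix with eigenvalues α_1 ≥ α_2 ≥ … ≥ α_m ≥ 0, let B be a complex m×n matrix with singular values β_1 ≥ β_2 ≥ … ≥ β_n ≥ 0, and let λ_1 ≥ λ_2 ≥ … ≥ λ_n be the eigenvalues of the Hermitian matrix C = B* A B. Then: (1) λ_{i+j−1} ≤ β_i² α_j for all i ∈ {1,…,n} and j ∈ {1,…,m} with i+j−1 ≤ n; and (2) β_i² α_j ≤ λ_{i+j−m} for all i ∈ {1,…,n} and j ∈ {1,…,m} with i+j > m. -/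
/-!
Courant–Fischer, in its easy half, bounds the `k`-th largest eigenvalue of a self-adjoint `T` on an
`n`-dimensional space from above by `c` as soon as `re ⟪T x, x⟫ ≤ c ‖x‖²` on a subspace of
dimension `n - k + 1`: such a subspace meets the span of the top `k` eigenvectors nontrivially.
For `C = B* A B` one has `⟪C x, x⟫ = ⟪A (B x), B x⟫`. Intersect the span of the eigenvectors of
`B* B` for `β_i², …, β_n²` with the preimage under `B` of the span of the eigenvectors of `A` for
`α_j, …, α_m`; by rank–nullity it has dimension at least `n - (i + j - 1) + 1`, and on it
`⟪C x, x⟫ ≤ α_j ‖B x‖² ≤ α_j β_i² ‖x‖²`. The lower bound is the same argument with the leading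
eigenvectors instead.
-/

open Module RCLike Submodule
open scoped InnerProductSpace

section Dimension

variable {K V₁ V₂ : Type*} [DivisionRing K] [AddCommGroup V₁] [Module K V₁] [AddCommGroup V₂]
  [Module K V₂] [FiniteDimensional K V₁] [FiniteDimensional K V₂]

lemma Submodule.finrank_add_finrank_le_finrank_comap_add (f : V₁ →ₗ[K] V₂) (W : Submodule K V₂) :
    finrank K V₁ + finrank K W ≤ finrank K (W.comap f) + finrank K V₂ := by
  have hker : LinearMap.ker (W.mkQ ∘ₗ f) = W.comap f := by
    rw [LinearMap.ker_comp, ker_mkQ]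
  have hrank := LinearMap.finrank_range_add_finrank_ker (W.mkQ ∘ₗ f)
  have hrange := (LinearMap.range (W.mkQ ∘ₗ f)).finrank_le
  have hquot := W.finrank_quotient_add_finrank
  rw [hker] at hrank
  omega

lemma Submodule.finrank_add_finrank_le_finrank_inf_comap_add (f : V₁ →ₗ[K] V₂)
    (V : Submodule K V₁) (W : Submodule K V₂) :
    finrank K V + finrank K W ≤ finrank K ↥(V ⊓ W.comap f) + finrank K V₂ := by
  have hcomap := finrank_add_finrank_le_finrank_comap_add f W
  have hsup := finrank_sup_add_finrank_inf_eq V (W.comap f)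
  have hle := (V ⊔ W.comap f).finrank_le
  omega

end Dimension

variable {𝕜 E : Type*} [RCLike 𝕜] [NormedAddCommGroup E] [InnerProductSpace 𝕜 E]

lemma le_of_forall_le_re_inner_of_forall_re_inner_le [FiniteDimensional 𝕜 E] {T : E →ₗ[𝕜] E}
    {V W : Submodule 𝕜 E} (hVW : finrank 𝕜 E < finrank 𝕜 V + finrank 𝕜 W) {c d : ℝ}
    (hV : ∀ x ∈ V, re ⟪T x, x⟫_𝕜 ≤ c * ‖x‖ ^ 2) (hW : ∀ x ∈ W, d * ‖x‖ ^ 2 ≤ re ⟪T x, x⟫_𝕜) :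
    d ≤ c := by
  obtain ⟨x, hxV, hxW, hx⟩ : ∃ x ∈ V, x ∈ W ∧ x ≠ 0 := by
    by_contra! h
    exact hVW.not_ge (finrank_add_finrank_le_of_disjoint (disjoint_def.mpr h))
  exact le_of_mul_le_mul_right ((hW x hxW).trans (hV x hxV)) (by positivity)

namespace OrthonormalBasis

section Eigenbasis

variable {ι : Type*} [Fintype ι] {T : E →ₗ[𝕜] E} {b : OrthonormalBasis ι 𝕜 E} {μ : ι → ℝ}

lemma repr_apply_of_apply_eq_smul (hb : ∀ i, T (b i) = (μ i : 𝕜) • b i) (x : E) (i : ι) :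
    b.repr (T x) i = μ i * b.repr x i := by
  classical
  conv_lhs => rw [← b.sum_repr x]
  simpa [hb, Pi.single_apply, real_smul_eq_coe_mul] using mul_comm _ _

lemma re_inner_apply_self_eq_sum (hb : ∀ i, T (b i) = (μ i : 𝕜) • b i) (x : E) :
    re ⟪T x, x⟫_𝕜 = ∑ i, μ i * ‖b.repr x i‖ ^ 2 := by
  rw [← b.repr.inner_map_map, PiLp.inner_apply, map_sum]
  refine Finset.sum_congr rfl fun i _ => ?_
  rw [repr_apply_of_apply_eq_smul hb, RCLike.inner_apply, map_mul (starRingEnd 𝕜), conj_ofReal,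
    mul_left_comm, mul_conj]
  norm_cast

lemma repr_eq_zero_of_mem_span {s : Set ι} {x : E} (hx : x ∈ span 𝕜 (b '' s)) {i : ι}
    (hi : i ∉ s) : b.repr x i = 0 := by
  rw [← b.coe_toBasis, Basis.mem_span_image] at hx
  simpa using Finsupp.notMem_support_iff.mp fun h => hi (hx h)

lemma finrank_span_image (s : Finset ι) : finrank 𝕜 (span 𝕜 (b '' s)) = s.card := by
  rw [Set.image_eq_range]
  exact (finrank_span_eq_card (b.orthonormal.linearIndependent.comp _ Subtype.val_injective)).trans
    (Fintype.card_coe s)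

lemma re_inner_apply_self_le_of_mem_span (hb : ∀ i, T (b i) = (μ i : 𝕜) • b i) {s : Set ι}
    {c : ℝ} (hc : ∀ i ∈ s, μ i ≤ c) {x : E} (hx : x ∈ span 𝕜 (b '' s)) :
    re ⟪T x, x⟫_𝕜 ≤ c * ‖x‖ ^ 2 := by
  rw [re_inner_apply_self_eq_sum hb, ← b.repr.norm_map, EuclideanSpace.norm_sq_eq, Finset.mul_sum]
  refine Finset.sum_le_sum fun i _ => ?_
  by_cases hi : i ∈ s
  · exact mul_le_mul_of_nonneg_right (hc i hi) (sq_nonneg _)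
  · simp [repr_eq_zero_of_mem_span hx hi]

lemma le_re_inner_apply_self_of_mem_span (hb : ∀ i, T (b i) = (μ i : 𝕜) • b i) {s : Set ι}
    {c : ℝ} (hc : ∀ i ∈ s, c ≤ μ i) {x : E} (hx : x ∈ span 𝕜 (b '' s)) :
    c * ‖x‖ ^ 2 ≤ re ⟪T x, x⟫_𝕜 := by
  rw [re_inner_apply_self_eq_sum hb, ← b.repr.norm_map, EuclideanSpace.norm_sq_eq, Finset.mul_sum]
  refine Finset.sum_le_sum fun i _ => ?_
  by_cases hi : i ∈ s
  · exact mul_le_mul_of_nonneg_right (hc i hi) (sq_nonneg _)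
  · simp [repr_eq_zero_of_mem_span hx hi]

end Eigenbasis

section SortedEigenbasis

variable {n : ℕ} {T : E →ₗ[𝕜] E} {b : OrthonormalBasis (Fin n) 𝕜 E} {μ : Fin n → ℝ}

lemma exists_finrank_eq_forall_re_inner_le (hb : ∀ i, T (b i) = (μ i : 𝕜) • b i)
    (hμ : Antitone μ) (k : Fin n) :
    ∃ V : Submodule 𝕜 E, finrank 𝕜 V = n - k ∧ ∀ x ∈ V, re ⟪T x, x⟫_𝕜 ≤ μ k * ‖x‖ ^ 2 :=
  ⟨span 𝕜 (b '' (Finset.Ici k : Set (Fin n))), by rw [b.finrank_span_image, Fin.card_Ici],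
    fun _ => b.re_inner_apply_self_le_of_mem_span hb fun _ hi => hμ (Finset.mem_Ici.mp hi)⟩

lemma exists_finrank_eq_forall_le_re_inner (hb : ∀ i, T (b i) = (μ i : 𝕜) • b i)
    (hμ : Antitone μ) (k : Fin n) :
    ∃ V : Submodule 𝕜 E, finrank 𝕜 V = k + 1 ∧ ∀ x ∈ V, μ k * ‖x‖ ^ 2 ≤ re ⟪T x, x⟫_𝕜 :=
  ⟨span 𝕜 (b '' (Finset.Iic k : Set (Fin n))), by rw [b.finrank_span_image, Fin.card_Iic],
    fun _ => b.le_re_inner_apply_self_of_mem_span hb fun _ hi => hμ (Finset.mem_Iic.mp hi)⟩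

lemma le_of_forall_re_inner_le (hb : ∀ i, T (b i) = (μ i : 𝕜) • b i) (hμ : Antitone μ)
    (k : Fin n) {V : Submodule 𝕜 E} (hV : n ≤ finrank 𝕜 V + k) {c : ℝ}
    (hc : ∀ x ∈ V, re ⟪T x, x⟫_𝕜 ≤ c * ‖x‖ ^ 2) : μ k ≤ c := by
  have := b.toBasis.finiteDimensional_of_finite
  obtain ⟨W, hW, hμW⟩ := exists_finrank_eq_forall_le_re_inner hb hμ k
  refine le_of_forall_le_re_inner_of_forall_re_inner_le ?_ hc hμW
  rw [finrank_eq_card_basis b.toBasis, Fintype.card_fin, hW]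
  omega

lemma le_of_forall_le_re_inner (hb : ∀ i, T (b i) = (μ i : 𝕜) • b i) (hμ : Antitone μ)
    (k : Fin n) {V : Submodule 𝕜 E} (hV : k + 1 ≤ finrank 𝕜 V) {c : ℝ}
    (hc : ∀ x ∈ V, c * ‖x‖ ^ 2 ≤ re ⟪T x, x⟫_𝕜) : c ≤ μ k := by
  have := b.toBasis.finiteDimensional_of_finite
  obtain ⟨W, hW, hμW⟩ := exists_finrank_eq_forall_re_inner_le hb hμ k
  refine le_of_forall_le_re_inner_of_forall_re_inner_le ?_ hμW hc
  rw [finrank_eq_card_basis b.toBasis, Fintype.card_fin, hW]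
  omega

end SortedEigenbasis

end OrthonormalBasis

section Compression

variable {F : Type*} [NormedAddCommGroup F] [InnerProductSpace 𝕜 F] {m n : ℕ}
  {f : E →ₗ[𝕜] F} {S G : E →ₗ[𝕜] E} {T : F →ₗ[𝕜] F}
  {a : OrthonormalBasis (Fin m) 𝕜 F} {α : Fin m → ℝ}
  {g : OrthonormalBasis (Fin n) 𝕜 E} {γ : Fin n → ℝ}
  {c : OrthonormalBasis (Fin n) 𝕜 E} {ν : Fin n → ℝ}

theorem eigenvalue_add_le_mul (ha : ∀ j, T (a j) = (α j : 𝕜) • a j) (hα : Antitone α)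
    (hα₀ : ∀ j, 0 ≤ α j) (hg : ∀ i, G (g i) = (γ i : 𝕜) • g i) (hγ : Antitone γ)
    (hc : ∀ k, S (c k) = (ν k : 𝕜) • c k) (hν : Antitone ν)
    (hS : ∀ x, re ⟪S x, x⟫_𝕜 = re ⟪T (f x), f x⟫_𝕜) (hG : ∀ x, re ⟪G x, x⟫_𝕜 = ‖f x‖ ^ 2)
    (i : Fin n) (j : Fin m) (hij : (i : ℕ) + j < n) : ν ⟨i + j, hij⟩ ≤ γ i * α j := by
  have := a.toBasis.finiteDimensional_of_finite
  have := g.toBasis.finiteDimensional_of_finite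
  obtain ⟨V, hV, hγV⟩ := g.exists_finrank_eq_forall_re_inner_le hg hγ i
  obtain ⟨W, hW, hαW⟩ := a.exists_finrank_eq_forall_re_inner_le ha hα j
  have hdim := finrank_add_finrank_le_finrank_inf_comap_add f V W
  rw [hV, hW, finrank_eq_card_basis a.toBasis, Fintype.card_fin] at hdim
  refine c.le_of_forall_re_inner_le hc hν _ (V := V ⊓ W.comap f) (by rw [Fin.val_mk]; omega) ?_
  rintro x ⟨hxV, hxW⟩
  calc re ⟪S x, x⟫_𝕜 = re ⟪T (f x), f x⟫_𝕜 := hS x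
    _ ≤ α j * ‖f x‖ ^ 2 := hαW _ hxW
    _ = α j * re ⟪G x, x⟫_𝕜 := by rw [hG]
    _ ≤ α j * (γ i * ‖x‖ ^ 2) := mul_le_mul_of_nonneg_left (hγV x hxV) (hα₀ j)
    _ = γ i * α j * ‖x‖ ^ 2 := by ring

theorem mul_le_eigenvalue_add_sub (ha : ∀ j, T (a j) = (α j : 𝕜) • a j) (hα : Antitone α)
    (hα₀ : ∀ j, 0 ≤ α j) (hg : ∀ i, G (g i) = (γ i : 𝕜) • g i) (hγ : Antitone γ)
    (hc : ∀ k, S (c k) = (ν k : 𝕜) • c k) (hν : Antitone ν)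
    (hS : ∀ x, re ⟪S x, x⟫_𝕜 = re ⟪T (f x), f x⟫_𝕜) (hG : ∀ x, re ⟪G x, x⟫_𝕜 = ‖f x‖ ^ 2)
    (i : Fin n) (j : Fin m) (hij : m ≤ (i : ℕ) + j + 1) :
    γ i * α j ≤ ν ⟨i + j + 1 - m, by omega⟩ := by
  have := a.toBasis.finiteDimensional_of_finite
  have := g.toBasis.finiteDimensional_of_finite
  obtain ⟨V, hV, hγV⟩ := g.exists_finrank_eq_forall_le_re_inner hg hγ i
  obtain ⟨W, hW, hαW⟩ := a.exists_finrank_eq_forall_le_re_inner ha hα j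
  have hdim := finrank_add_finrank_le_finrank_inf_comap_add f V W
  rw [hV, hW, finrank_eq_card_basis a.toBasis, Fintype.card_fin] at hdim
  refine c.le_of_forall_le_re_inner hc hν _ (V := V ⊓ W.comap f) (by rw [Fin.val_mk]; omega) ?_
  rintro x ⟨hxV, hxW⟩
  calc γ i * α j * ‖x‖ ^ 2 = α j * (γ i * ‖x‖ ^ 2) := by ring
    _ ≤ α j * re ⟪G x, x⟫_𝕜 := mul_le_mul_of_nonneg_left (hγV x hxV) (hα₀ j)
    _ = α j * ‖f x‖ ^ 2 := by rw [hG]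
    _ ≤ re ⟪T (f x), f x⟫_𝕜 := hαW _ hxW
    _ = re ⟪S x, x⟫_𝕜 := (hS x).symm

end Compression

namespace Matrix

variable {ι κ : Type*} [Fintype ι] [DecidableEq ι] [Fintype κ] [DecidableEq κ]

lemma IsHermitian.toEuclideanLin_reindex_eigenvectorBasis {M : Matrix ι ι 𝕜} (hM : M.IsHermitian)
    {ι' : Type*} [Fintype ι'] {ν : ι' → ℝ} (e : ι' ≃ ι) (hν : ∀ k, ν k = hM.eigenvalues (e k))
    (k : ι') :
    toEuclideanLin M (hM.eigenvectorBasis.reindex e.symm k) =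
      (ν k : 𝕜) • hM.eigenvectorBasis.reindex e.symm k := by
  rw [OrthonormalBasis.reindex_apply, Equiv.symm_symm, hν, toLpLin_apply,
    hM.mulVec_eigenvectorBasis, WithLp.toLp_smul, WithLp.toLp_ofLp, real_smul_eq_coe_smul (K := 𝕜)]

lemma inner_toEuclideanLin_conjTranspose_mul_mul_self (A : Matrix κ κ 𝕜) (B : Matrix κ ι 𝕜)
    (x : EuclideanSpace 𝕜 ι) :
    ⟪toEuclideanLin (Bᴴ * A * B) x, x⟫_𝕜 =
      ⟪toEuclideanLin A (toEuclideanLin B x), toEuclideanLin B x⟫_𝕜 := by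
  rw [Matrix.mul_assoc, toLpLin_mul_same, toEuclideanLin_conjTranspose_eq_adjoint,
    LinearMap.comp_apply, LinearMap.adjoint_inner_left, toLpLin_mul_same, LinearMap.comp_apply]

lemma re_inner_toEuclideanLin_conjTranspose_mul_self (B : Matrix κ ι 𝕜) (x : EuclideanSpace 𝕜 ι) :
    re ⟪toEuclideanLin (Bᴴ * B) x, x⟫_𝕜 = ‖toEuclideanLin B x‖ ^ 2 := by
  simpa [inner_self_eq_norm_sq] using
    congrArg re (inner_toEuclideanLin_conjTranspose_mul_mul_self 1 B x)

end Matrix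

open Matrix ComplexOrder

/-- interlacing-type inequalities for the eigenvalues of `B* A B`
in terms of the eigenvalues of the PSD Hermitian `A` and the singular values of `B`. -/
theorem eigenvalues_conj_bounds (m n : ℕ)
    (A : Matrix (Fin m) (Fin m) ℂ) (hA : A.PosSemidef)
    (B : Matrix (Fin m) (Fin n) ℂ)
    (hC : (Bᴴ * A * B).IsHermitian)
    (hBB : (Bᴴ * B).IsHermitian)
    (α : Fin m → ℝ) (hα_anti : ∀ i j : Fin m, i ≤ j → α j ≤ α i)
    (hα_eig : ∃ σ : Equiv.Perm (Fin m), ∀ i, α i = hA.1.eigenvalues (σ i))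
    (β : Fin n → ℝ) (hβ_nonneg : ∀ i, 0 ≤ β i)
    (hβ_anti : ∀ i j : Fin n, i ≤ j → β j ≤ β i)
    (hβ_sv : ∃ τ : Equiv.Perm (Fin n), ∀ i, β i ^ 2 = hBB.eigenvalues (τ i))
    (lam : Fin n → ℝ) (hlam_anti : ∀ i j : Fin n, i ≤ j → lam j ≤ lam i)
    (hlam_eig : ∃ π : Equiv.Perm (Fin n), ∀ i, lam i = hC.eigenvalues (π i)) :
    (∀ (i : Fin n) (j : Fin m) (h : (i : ℕ) + (j : ℕ) < n),
        lam ⟨(i : ℕ) + (j : ℕ), h⟩ ≤ β i ^ 2 * α j) ∧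
      (∀ (i : Fin n) (j : Fin m), m ≤ (i : ℕ) + (j : ℕ) + 1 →
        β i ^ 2 * α j ≤
          lam ⟨(i : ℕ) + (j : ℕ) + 1 - m, by
            have hi := i.isLt; have hj := j.isLt; omega⟩) := by
  obtain ⟨σ, hσ⟩ := hα_eig
  obtain ⟨τ, hτ⟩ := hβ_sv
  obtain ⟨π, hπ⟩ := hlam_eig
  have ha := hA.1.toEuclideanLin_reindex_eigenvectorBasis σ hσ
  have hg := hBB.toEuclideanLin_reindex_eigenvectorBasis τ hτ
  have hc := hC.toEuclideanLin_reindex_eigenvectorBasis π hπ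
  have hα₀ (j : Fin m) : 0 ≤ α j := hσ j ▸ hA.eigenvalues_nonneg (σ j)
  have hγ : Antitone fun i => β i ^ 2 := fun i j hij =>
    pow_le_pow_left₀ (hβ_nonneg j) (hβ_anti i j hij) 2
  have hS x := congrArg re (inner_toEuclideanLin_conjTranspose_mul_mul_self A B x)
  have hG := re_inner_toEuclideanLin_conjTranspose_mul_self B
  exact ⟨eigenvalue_add_le_mul ha hα_anti hα₀ hg hγ hc hlam_anti hS hG,
    mul_le_eigenvalue_add_sub ha hα_anti hα₀ hg hγ hc hlam_anti hS hG⟩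
end

section
/- Let m1, m2, r be positive integers with m1 ≥ 2, let ρ1 ≥ 0, let H be the real (m1−1)×m1 Toeplitz matrix with ones on the diagonal and minus ones on the first superdiagonal, and set H_{ρ1} = I_{m1} + ρ1 Hᵀ H. Let W ∈ ℂ^{m1×m2}, X ∈ ℂ^{m1×r}, Y ∈ ℂ^{r×m2}, and define G = (XY − W)Y* + ρ1 Hᵀ H X Y Y* (the partial gradient ∇_X h at (X,Y) of h(X,Y) = ½(‖XY−W‖_F² + ρ1‖HXY‖_F²)). Suppose Y = U S V* where U ∈ ℂ^{r×r} and V ∈ ℂ^{m2×m2} are unitary and S is an r×m2 rectangular diagonal matrix with diagonal entries σ_1 ≥ … ≥ σ_t > 0 followed by zeros, and let U_1 denote the r×t submatrix of U consisting of its first t columns. Let P be a matrix satisfying the four Penrose equations for Y Y*, and set d = −H_{ρ1}^{−1} G P. Then Re tr(G* d) ≤ −(1/((1+4ρ1) σ_1²)) · ‖G U_1‖_F². -/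
/-!
Diagonalising `Y Yᴴ = U D Uᴴ` with `D = diag(σ₁², …, σ_t², 0, …, 0)`, uniqueness of the
Moore–Penrose inverse forces `P = U D⁺ Uᴴ`. Since `‖H x‖² ≤ 4 ‖x‖²`, we have
`H_ρ ≤ (1 + 4ρ) I` in the Loewner order, hence `(1 + 4ρ)⁻¹ I ≤ H_ρ⁻¹`. Writing `K = G U`,
`-Re tr(Gᴴ d) = Σ_{l ≤ t} σ_l⁻² (Kᴴ H_ρ⁻¹ K)_{ll} ≥ (1 + 4ρ)⁻¹ Σ_{l ≤ t} σ_l⁻² ‖K e_l‖²`,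
and `σ_l ≤ σ₁` gives the bound.
-/

open Matrix Complex BigOperators

noncomputable section

/-- The `(m-1) × m` finite-difference Toeplitz matrix `Toeplitz(0,1,-1)`. -/
def toeplitzD (m : ℕ) : Matrix (Fin (m - 1)) (Fin m) ℝ :=
  Matrix.of fun i j =>
    if (j : ℕ) = (i : ℕ) then 1 else if (j : ℕ) = (i : ℕ) + 1 then -1 else 0

/-- `HᵀH` as a complex matrix, for `H` the Toeplitz matrix. -/
def HtH (m : ℕ) : Matrix (Fin m) (Fin m) ℂ :=
  ((toeplitzD m)ᵀ * toeplitzD m).map (Complex.ofReal)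

structure IsMoorePenroseInverse {R : Type*} [Mul R] [Star R] (a p : R) : Prop where
  mul_inv_mul : a * p * a = a
  inv_mul_inv : p * a * p = p
  isSelfAdjoint_mul_inv : IsSelfAdjoint (a * p)
  isSelfAdjoint_inv_mul : IsSelfAdjoint (p * a)

namespace IsMoorePenroseInverse

theorem unique {R : Type*} [Semigroup R] [StarMul R] {a p q : R}
    (hp : IsMoorePenroseInverse a p) (hq : IsMoorePenroseInverse a q) : p = q := by
  have hpa : p * a = q * a := calc
    p * a = star (p * (a * q * a)) := by rw [hq.mul_inv_mul, hp.isSelfAdjoint_inv_mul.star_eq]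
    _ = star (q * a) * star (p * a) := by rw [← star_mul]; simp only [mul_assoc]
    _ = q * (a * p * a) := by
      rw [hq.isSelfAdjoint_inv_mul.star_eq, hp.isSelfAdjoint_inv_mul.star_eq]
      simp only [mul_assoc]
    _ = q * a := by rw [hp.mul_inv_mul]
  have hap : a * p = a * q := calc
    a * p = star (a * q * a * p) := by rw [hq.mul_inv_mul, hp.isSelfAdjoint_mul_inv.star_eq]
    _ = star (a * p) * star (a * q) := by rw [← star_mul]; simp only [mul_assoc]
    _ = a * (p * a) * q := by
      rw [hq.isSelfAdjoint_mul_inv.star_eq, hp.isSelfAdjoint_mul_inv.star_eq]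
      simp only [mul_assoc]
    _ = a * q := by rw [hpa, ← mul_assoc, hq.mul_inv_mul]
  calc p = p * a * p := hp.inv_mul_inv.symm
    _ = q * (a * q) := by rw [hpa, mul_assoc, hap]
    _ = q := by rw [← mul_assoc, hq.inv_mul_inv]

theorem conj {R : Type*} [Monoid R] [StarMul R] {a p u : R} (h : IsMoorePenroseInverse a p)
    (hu : star u * u = 1) : IsMoorePenroseInverse (u * a * star u) (u * p * star u) := by
  have hmul (x y : R) : u * x * star u * (u * y * star u) = u * (x * y) * star u := by
    simp only [mul_assoc]
    rw [← mul_assoc (star u), hu, one_mul]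
  refine ⟨?_, ?_, ?_, ?_⟩
  · rw [hmul, hmul, h.mul_inv_mul]
  · rw [hmul, hmul, h.inv_mul_inv]
  · rw [hmul]; exact h.isSelfAdjoint_mul_inv.conjugate u
  · rw [hmul]; exact h.isSelfAdjoint_inv_mul.conjugate u

end IsMoorePenroseInverse

/-- The inverse `d⁻¹` is entrywise, with `0⁻¹ = 0`. -/
theorem Matrix.isMoorePenroseInverse_diagonal {n 𝕜 : Type*} [Fintype n] [DecidableEq n]
    [Field 𝕜] [StarRing 𝕜] (d : n → 𝕜) : IsMoorePenroseInverse (diagonal d) (diagonal d⁻¹) := by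
  refine ⟨?_, ?_, ?_, ?_⟩ <;> simp only [diagonal_mul_diagonal]
  · exact congrArg diagonal (funext fun i => mul_inv_mul_cancel (d i))
  · exact congrArg diagonal (funext fun i => by simpa using mul_inv_mul_cancel (d i)⁻¹)
  all_goals
    refine isHermitian_diagonal_iff.2 fun i => ?_
    rcases eq_or_ne (d i) 0 with hi | hi <;> simp [IsSelfAdjoint, hi]

def zeroExtend {t r : ℕ} (σ : Fin t → ℝ) (l : Fin r) : ℝ :=
  if h : (l : ℕ) < t then σ ⟨l, h⟩ else 0

def rectDiag (r m : ℕ) {t : ℕ} (σ : Fin t → ℝ) : Matrix (Fin r) (Fin m) ℂ :=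
  Matrix.of fun i j => if h : (i : ℕ) = (j : ℕ) ∧ (i : ℕ) < t then (σ ⟨(i : ℕ), h.2⟩ : ℂ) else 0

lemma rectDiag_mul_conjTranspose {r m t : ℕ} (htm : t ≤ m) (σ : Fin t → ℝ) :
    rectDiag r m σ * (rectDiag r m σ)ᴴ =
      diagonal fun l => ((zeroExtend σ l ^ 2 : ℝ) : ℂ) := by
  ext i j
  rw [mul_apply, diagonal_apply]
  by_cases hi : (i : ℕ) < t
  · rw [Finset.sum_eq_single ⟨i, hi.trans_le htm⟩]
    · by_cases hij : i = j
      · subst hij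
        simp [rectDiag, zeroExtend, hi, sq]
      · have : (j : ℕ) ≠ i := fun h => hij (Fin.ext h.symm)
        simp [rectDiag, hij, this]
    · intro k _ hk
      have : (i : ℕ) ≠ k := fun h => hk (Fin.ext h.symm)
      simp [rectDiag, this]
    · simp
  · have : zeroExtend σ i = 0 := dif_neg hi
    simp [rectDiag, hi, this]

lemma mul_conjTranspose_self_eq_of_eq_mul_mul_conjTranspose {α : Type*} [Semiring α]
    [StarRing α] {m n k : Type*} [Fintype n] [Fintype k] [DecidableEq k] {Y : Matrix m k α} {U : Matrix m n α}
    {S : Matrix n k α} {V : Matrix k k α} (hY : Y = U * S * Vᴴ) (hV : Vᴴ * V = 1) :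
    Y * Yᴴ = U * (S * Sᴴ) * Uᴴ := by
  rw [hY, conjTranspose_mul, conjTranspose_mul, conjTranspose_conjTranspose]
  simp only [Matrix.mul_assoc]
  rw [← Matrix.mul_assoc Vᴴ, hV, Matrix.one_mul]

open Finset in
lemma sum_range_norm_sub_sq_le {E : Type*} [SeminormedAddCommGroup E] (f : ℕ → E) (n : ℕ) :
    ∑ i ∈ range n, ‖f i - f (i + 1)‖ ^ 2 ≤ 4 * ∑ i ∈ range (n + 1), ‖f i‖ ^ 2 := by
  have hterm (i : ℕ) : ‖f i - f (i + 1)‖ ^ 2 ≤ 2 * (‖f i‖ ^ 2 + ‖f (i + 1)‖ ^ 2) :=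
    (pow_le_pow_left₀ (norm_nonneg _) (norm_sub_le _ _) 2).trans (add_sq_le ..)
  calc ∑ i ∈ range n, ‖f i - f (i + 1)‖ ^ 2
      ≤ ∑ i ∈ range n, 2 * (‖f i‖ ^ 2 + ‖f (i + 1)‖ ^ 2) := sum_le_sum fun i _ => hterm i
    _ = 2 * ∑ i ∈ range n, ‖f i‖ ^ 2 + 2 * ∑ i ∈ range n, ‖f (i + 1)‖ ^ 2 := by
      rw [← mul_add, ← sum_add_distrib, mul_sum]
    _ ≤ 4 * ∑ i ∈ range (n + 1), ‖f i‖ ^ 2 := by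
      linarith [sum_range_succ (fun i => ‖f i‖ ^ 2) n, sum_range_succ' (fun i => ‖f i‖ ^ 2) n,
        sq_nonneg ‖f 0‖, sq_nonneg ‖f n‖]

lemma toeplitzD_mulVec {m : ℕ} (x : Fin m → ℂ) (i : Fin (m - 1)) :
    ((toeplitzD m).map ofReal *ᵥ x) i = x ⟨i, by omega⟩ - x ⟨i + 1, by omega⟩ := by
  rw [mulVec, dotProduct,
    Fintype.sum_eq_add ⟨i, by omega⟩ ⟨i + 1, by omega⟩ (by simp [Fin.ext_iff])]
  · simp [toeplitzD, sub_eq_add_neg]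
  · rintro j ⟨h1, h2⟩
    simp only [ne_eq, Fin.ext_iff] at h1 h2
    simp [toeplitzD, h1, h2]

lemma sum_norm_toeplitzD_mulVec_sq_le {m : ℕ} (x : Fin m → ℂ) :
    ∑ i, ‖((toeplitzD m).map ofReal *ᵥ x) i‖ ^ 2 ≤ 4 * ∑ j, ‖x j‖ ^ 2 := by
  obtain _ | n := m
  · simp
  set f : ℕ → ℂ := fun k => if h : k < n + 1 then x ⟨k, h⟩ else 0
  have hf (k : ℕ) (hk : k < n + 1) : f k = x ⟨k, hk⟩ := dif_pos hk
  have hf' (j : Fin (n + 1)) : f j = x j := hf j j.2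
  have := sum_range_norm_sub_sq_le f n
  rw [← Fin.sum_univ_eq_sum_range, ← Fin.sum_univ_eq_sum_range] at this
  simp only [toeplitzD_mulVec]
  simpa [hf, hf'] using this

lemma star_dotProduct_self_eq {n : Type*} [Fintype n] (v : n → ℂ) :
    star v ⬝ᵥ v = ((∑ i, ‖v i‖ ^ 2 : ℝ) : ℂ) := by
  simp [dotProduct, Complex.conj_mul']

lemma HtH_eq_conjTranspose_mul_self (m : ℕ) :
    HtH m = ((toeplitzD m).map ofReal)ᴴ * (toeplitzD m).map ofReal := by
  ext i j
  simp [HtH, mul_apply]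

lemma trace_conjTranspose_mul_mul_conj {α : Type*} [CommSemiring α] [StarRing α]
    {m n : Type*} [Fintype m] [Fintype n] (G : Matrix m n α) (B : Matrix m m α)
    (U Q : Matrix n n α) :
    (Gᴴ * (B * G * (U * Q * Uᴴ))).trace = ((G * U)ᴴ * B * (G * U) * Q).trace := by
  rw [show Gᴴ * (B * G * (U * Q * Uᴴ)) = Gᴴ * B * (G * U) * Q * Uᴴ by
      simp only [Matrix.mul_assoc], trace_mul_comm, conjTranspose_mul]
  simp only [Matrix.mul_assoc]

lemma re_trace_mul_diagonal_ofReal {n : Type*} [Fintype n] [DecidableEq n] (M : Matrix n n ℂ)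
    (w : n → ℝ) : ((M * diagonal fun i => (w i : ℂ)).trace).re = ∑ i, (M i i).re * w i := by
  simp [trace, mul_diagonal, Complex.re_sum]

section LoewnerOrder

open scoped MatrixOrder ComplexOrder

lemma HtH_posSemidef (m : ℕ) : (HtH m).PosSemidef :=
  HtH_eq_conjTranspose_mul_self m ▸ posSemidef_conjTranspose_mul_self _

lemma HtH_le_four_smul_one (m : ℕ) : HtH m ≤ (4 : ℂ) • 1 := by
  set H := (toeplitzD m).map ofReal
  rw [Matrix.le_iff, posSemidef_iff_dotProduct_mulVec, HtH_eq_conjTranspose_mul_self]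
  refine ⟨.sub (by simp [IsHermitian]) (isHermitian_conjTranspose_mul_self H), fun x => ?_⟩
  have hquad : star x ⬝ᵥ ((Hᴴ * H) *ᵥ x) = star (H *ᵥ x) ⬝ᵥ (H *ᵥ x) := by
    rw [← mulVec_mulVec, dotProduct_mulVec, star_mulVec, vecMul_conjTranspose]
  rw [sub_mulVec, dotProduct_sub, hquad, smul_mulVec, one_mulVec, dotProduct_smul,
    star_dotProduct_self_eq, star_dotProduct_self_eq, smul_eq_mul, ← ofReal_ofNat, ← ofReal_mul,
    ← ofReal_sub, zero_le_real, sub_nonneg]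
  exact sum_norm_toeplitzD_mulVec_sq_le x

open scoped Matrix.Norms.L2Operator in
lemma Matrix.inv_smul_one_le_inv {n : Type*} [Fintype n] [DecidableEq n] {A : Matrix n n ℂ}
    (hA : 0 ≤ A) (hu : IsUnit A) {c : ℂ} (hc : c ≠ 0) (h : A ≤ c • 1) :
    c⁻¹ • (1 : Matrix n n ℂ) ≤ A⁻¹ := by
  have hcinv : (c • 1 : Matrix n n ℂ)⁻¹ = c⁻¹ • 1 :=
    inv_eq_right_inv (by rw [smul_mul_smul_comm, mul_inv_cancel₀ hc, one_mul, one_smul])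
  have hcu : IsUnit (c • 1 : Matrix n n ℂ) := (isUnit_iff_isUnit_det _).2 (by simp [hc])
  simpa [coe_units_inv, hcinv] using CStarAlgebra.inv_le_inv (a := hu.unit) (b := hcu.unit) hA h

lemma inv_smul_one_le_inv_one_add_smul_HtH (m : ℕ) {ρ : ℝ} (hρ : 0 ≤ ρ) :
    (((1 + 4 * ρ)⁻¹ : ℝ) : ℂ) • (1 : Matrix (Fin m) (Fin m) ℂ) ≤ (1 + (ρ : ℂ) • HtH m)⁻¹ := by
  have hρ' : (0 : ℂ) ≤ ρ := zero_le_real.2 hρ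
  have hA : (1 + (ρ : ℂ) • HtH m).PosDef :=
    PosDef.one.add_posSemidef ((HtH_posSemidef m).smul hρ')
  rw [ofReal_inv]
  refine inv_smul_one_le_inv hA.posSemidef.nonneg hA.isUnit (ofReal_ne_zero.2 (by positivity)) ?_
  · have h : ((1 + 4 * ρ : ℝ) : ℂ) • 1 - (1 + (ρ : ℂ) • HtH m) =
        (ρ : ℂ) • ((4 : ℂ) • 1 - HtH m) := by
      push_cast
      module
    rw [Matrix.le_iff, h]
    exact (le_iff.1 (HtH_le_four_smul_one m)).smul hρ'

lemma le_re_conjTranspose_mul_mul_apply_self {m n : Type*} [Fintype m] [DecidableEq m]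
    [Fintype n] {B : Matrix m m ℂ} {c : ℝ} (hB : (c : ℂ) • 1 ≤ B) (K : Matrix m n ℂ) (l : n) :
    c * ∑ i, ‖K i l‖ ^ 2 ≤ ((Kᴴ * B * K) l l).re := by
  have hK : (Kᴴ * K) l l = ((∑ i, ‖K i l‖ ^ 2 : ℝ) : ℂ) := by
    simp [mul_apply, Complex.conj_mul']
  have h := ((le_iff.1 hB).conjTranspose_mul_mul_same K).diag_nonneg (i := l)
  rw [Matrix.mul_sub, Matrix.sub_mul, Matrix.mul_smul, Matrix.smul_mul, Matrix.mul_one,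
    Matrix.sub_apply, Matrix.smul_apply, hK, smul_eq_mul, ← ofReal_mul, sub_nonneg,
    Complex.le_def, ofReal_re] at h
  exact h.1

lemma le_re_trace_conjTranspose_mul_mul_mul_diagonal {m n : Type*} [Fintype m] [DecidableEq m]
    [Fintype n] [DecidableEq n] {B : Matrix m m ℂ} {c : ℝ} (hB : (c : ℂ) • 1 ≤ B)
    (K : Matrix m n ℂ) {w : n → ℝ} (hw : ∀ l, 0 ≤ w l) :
    c * ∑ l, (∑ i, ‖K i l‖ ^ 2) * w l ≤ ((Kᴴ * B * K * diagonal fun l => (w l : ℂ)).trace).re := by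
  rw [re_trace_mul_diagonal_ofReal, Finset.mul_sum]
  refine Finset.sum_le_sum fun l _ => ?_
  rw [← mul_assoc]
  exact mul_le_mul_of_nonneg_right (le_re_conjTranspose_mul_mul_apply_self hB K l) (hw l)

end LoewnerOrder

lemma inv_sq_mul_sum_castLE_le {r t : ℕ} (htr : t ≤ r) (ht0 : 0 < t) {σ : Fin t → ℝ}
    (hσpos : ∀ i, 0 < σ i) (hσanti : ∀ i j : Fin t, i ≤ j → σ j ≤ σ i) {a : Fin r → ℝ}
    (ha : ∀ l, 0 ≤ a l) :
    (σ ⟨0, ht0⟩ ^ 2)⁻¹ * ∑ k, a (Fin.castLE htr k) ≤ ∑ l, a l * (zeroExtend σ l ^ 2)⁻¹ := by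
  have hext (k : Fin t) : zeroExtend σ (Fin.castLE htr k) = σ k := dif_pos k.2
  calc (σ ⟨0, ht0⟩ ^ 2)⁻¹ * ∑ k, a (Fin.castLE htr k)
      ≤ ∑ k, a (Fin.castLE htr k) * (zeroExtend σ (Fin.castLE htr k) ^ 2)⁻¹ := by
        rw [Finset.mul_sum]
        refine Finset.sum_le_sum fun k _ => ?_
        rw [hext, mul_comm]
        have hk := hσpos k
        exact mul_le_mul_of_nonneg_left
          (inv_anti₀ (by positivity) (pow_le_pow_left₀ hk.le (hσanti ⟨0, ht0⟩ k (Nat.zero_le _)) 2))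
          (ha _)
    _ ≤ ∑ l, a l * (zeroExtend σ l ^ 2)⁻¹ := by
        have := Finset.sum_le_univ_sum_of_nonneg (s := Finset.univ.map (Fin.castLEEmb htr))
          (f := fun l => a l * (zeroExtend σ l ^ 2)⁻¹) fun l => mul_nonneg (ha l) (by positivity)
        rwa [Finset.sum_map] at this

theorem descent_direction_X_general (m1 m2 r t : ℕ)
    (ρ1 : ℝ) (hρ1 : 0 ≤ ρ1)
    (Y : Matrix (Fin r) (Fin m2) ℂ)
    (G : Matrix (Fin m1) (Fin r) ℂ)
    (U : Matrix (Fin r) (Fin r) ℂ) (V : Matrix (Fin m2) (Fin m2) ℂ)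
    (hU2 : Uᴴ * U = 1)
    (hV2 : Vᴴ * V = 1)
    (ht0 : 0 < t) (htr : t ≤ r) (htm : t ≤ m2)
    (σ : Fin t → ℝ) (hσpos : ∀ i, 0 < σ i)
    (hσanti : ∀ i j : Fin t, i ≤ j → σ j ≤ σ i)
    (hY : Y = U * (Matrix.of fun (i : Fin r) (j : Fin m2) =>
        if h : (i : ℕ) = (j : ℕ) ∧ (i : ℕ) < t then (σ ⟨(i : ℕ), h.2⟩ : ℂ) else 0) * Vᴴ)
    (P : Matrix (Fin r) (Fin r) ℂ)
    (hP1 : (Y * Yᴴ) * P * (Y * Yᴴ) = Y * Yᴴ) (hP2 : P * (Y * Yᴴ) * P = P)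
    (hP3 : ((Y * Yᴴ) * P)ᴴ = (Y * Yᴴ) * P) (hP4 : (P * (Y * Yᴴ))ᴴ = P * (Y * Yᴴ))
    (d : Matrix (Fin m1) (Fin r) ℂ)
    (hd : d = -(((1 : Matrix (Fin m1) (Fin m1) ℂ) + (ρ1 : ℂ) • HtH m1)⁻¹ * G * P)) :
    ((Gᴴ * d).trace).re ≤
      -(1 / ((1 + 4 * ρ1) * σ ⟨0, ht0⟩ ^ 2)) *
        frobSqC (G * U.submatrix id (Fin.castLE htr)) := by
  set K := G * U
  set w : Fin r → ℝ := fun l => (zeroExtend σ l ^ 2)⁻¹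
  have hYY : Y * Yᴴ = U * diagonal (fun l => ((zeroExtend σ l ^ 2 : ℝ) : ℂ)) * Uᴴ := by
    rw [mul_conjTranspose_self_eq_of_eq_mul_mul_conjTranspose (S := rectDiag r m2 σ) hY hV2,
      rectDiag_mul_conjTranspose htm]
  have hP : P = U * diagonal (fun l => (w l : ℂ)) * Uᴴ := by
    have hinv : (fun l => ((zeroExtend σ l ^ 2 : ℝ) : ℂ))⁻¹ = fun l => (w l : ℂ) :=
      funext fun l => by simp [w]
    refine IsMoorePenroseInverse.unique ⟨hP1, hP2, hP3, hP4⟩ ?_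
    rw [hYY, ← hinv]
    exact (isMoorePenroseInverse_diagonal _).conj hU2
  have hquad := le_re_trace_conjTranspose_mul_mul_mul_diagonal
    (inv_smul_one_le_inv_one_add_smul_HtH m1 hρ1) K (w := w) fun l => by positivity
  have hsub := inv_sq_mul_sum_castLE_le htr ht0 hσpos hσanti (a := fun l => ∑ i, ‖K i l‖ ^ 2)
    fun l => by positivity
  have hfrob : frobSqC (G * U.submatrix id (Fin.castLE htr)) =
      ∑ k, ∑ i, ‖K i (Fin.castLE htr k)‖ ^ 2 := by
    rw [frobSqC, Finset.sum_comm]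
    rfl
  have hc : 0 ≤ (1 + 4 * ρ1)⁻¹ := by positivity
  rw [hd, hP, Matrix.mul_neg, trace_neg, neg_re, trace_conjTranspose_mul_mul_conj, hfrob,
    one_div, mul_inv]
  linarith [mul_le_mul_of_nonneg_left hsub hc]

/-- descent property of the scaled gradient direction in `X`. -/
theorem descent_direction_X (m1 m2 r t : ℕ)
    (hm1 : 2 ≤ m1) (hm2 : 0 < m2) (hr : 0 < r)
    (ρ1 : ℝ) (hρ1 : 0 ≤ ρ1)
    (W : Matrix (Fin m1) (Fin m2) ℂ)
    (X : Matrix (Fin m1) (Fin r) ℂ) (Y : Matrix (Fin r) (Fin m2) ℂ)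
    (G : Matrix (Fin m1) (Fin r) ℂ)
    (hG : G = (X * Y - W) * Yᴴ + (ρ1 : ℂ) • (HtH m1 * X * Y * Yᴴ))
    (U : Matrix (Fin r) (Fin r) ℂ) (V : Matrix (Fin m2) (Fin m2) ℂ)
    (hU1 : U * Uᴴ = 1) (hU2 : Uᴴ * U = 1)
    (hV1 : V * Vᴴ = 1) (hV2 : Vᴴ * V = 1)
    (ht0 : 0 < t) (htr : t ≤ r) (htm : t ≤ m2)
    (σ : Fin t → ℝ) (hσpos : ∀ i, 0 < σ i)
    (hσanti : ∀ i j : Fin t, i ≤ j → σ j ≤ σ i)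
    (hY : Y = U * (Matrix.of fun (i : Fin r) (j : Fin m2) =>
        if h : (i : ℕ) = (j : ℕ) ∧ (i : ℕ) < t then (σ ⟨(i : ℕ), h.2⟩ : ℂ) else 0) * Vᴴ)
    (P : Matrix (Fin r) (Fin r) ℂ)
    (hP1 : (Y * Yᴴ) * P * (Y * Yᴴ) = Y * Yᴴ) (hP2 : P * (Y * Yᴴ) * P = P)
    (hP3 : ((Y * Yᴴ) * P)ᴴ = (Y * Yᴴ) * P) (hP4 : (P * (Y * Yᴴ))ᴴ = P * (Y * Yᴴ))
    (d : Matrix (Fin m1) (Fin r) ℂ)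
    (hd : d = -(((1 : Matrix (Fin m1) (Fin m1) ℂ) + (ρ1 : ℂ) • HtH m1)⁻¹ * G * P)) :
    ((Gᴴ * d).trace).re ≤
      -(1 / ((1 + 4 * ρ1) * σ ⟨0, ht0⟩ ^ 2)) *
        frobSqC (G * U.submatrix id (Fin.castLE htr)) :=
  descent_direction_X_general m1 m2 r t ρ1 hρ1 Y G U V hU2 hV2 ht0 htr htm σ hσpos hσanti hY P hP1
    hP2 hP3 hP4 d hd
end
end

section
/- Let m1, m2, r, p be positive integers, ρ1 ≥ 0, let H be a real p×m1 matrix, H_{ρ1} = I_{m1} + ρ1 Hᵀ H, and W ∈ ℂ^{m1×m2}. Define h(X,Y) = ½(‖XY−W‖_F² + ρ1‖HXY‖_F²), ∇_X h(X,Y) = (XY−W)Y* + ρ1 HᵀH X Y Y*, and ∇_Y h(X,Y) = X*(XY−W) + ρ1 X* HᵀH X Y. Then for all X, ΔX ∈ ℂ^{m1×r} and Y, ΔY ∈ ℂ^{r×m2}: (1) ‖∇_X h(X,Y) − ∇_X h(X+ΔX,Y)‖_F ≤ ‖H_{ρ1}‖_2 · ‖Y Y*‖_2 · ‖ΔX‖_F,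 and (2) ‖∇_Y h(X,Y) − ∇_Y h(X,Y+ΔY)‖_F ≤ ‖X* H_{ρ1} X‖_2 · ‖ΔY‖_F. -/
/-!
Both partial gradients are affine in the block being varied, so the differences are exactly
`-(I + ρ HᵀH) ΔX (Y Yᴴ)` and `-Xᴴ (I + ρ HᵀH) X ΔY`. Applying `‖A x‖ ≤ ‖A‖₂ ‖x‖` to each column
gives `‖A B‖_F ≤ ‖A‖₂ ‖B‖_F`, and conjugate transposition (which preserves both norms) gives
`‖B A‖_F ≤ ‖B‖_F ‖A‖₂`.
-/

open Matrix Complex BigOperators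

noncomputable section

/-- Frobenius norm of a complex matrix. -/
def frobNorm {a b : ℕ} (M : Matrix (Fin a) (Fin b) ℂ) : ℝ :=
  Real.sqrt (frobSqC M)

/-- Spectral norm (largest singular value) of a complex matrix: the operator norm
of the induced map between Euclidean spaces. -/
def specNorm {a b : ℕ} (M : Matrix (Fin a) (Fin b) ℂ) : ℝ :=
  ‖LinearMap.toContinuousLinearMap (Matrix.toEuclideanLin M)‖

section FrobeniusSpectral

variable {a b c : ℕ}

lemma specNorm_nonneg (M : Matrix (Fin a) (Fin b) ℂ) : 0 ≤ specNorm M :=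
  norm_nonneg _

lemma frobSqC_eq_sum_norm_sq_col (M : Matrix (Fin a) (Fin b) ℂ) :
    frobSqC M = ∑ j, ‖WithLp.toLp 2 (Mᵀ j)‖ ^ 2 := by
  simp only [frobSqC, EuclideanSpace.norm_sq_eq, transpose_apply]
  exact Finset.sum_comm

lemma frobNorm_mul_le_specNorm_mul (A : Matrix (Fin a) (Fin b) ℂ)
    (B : Matrix (Fin b) (Fin c) ℂ) :
    frobNorm (A * B) ≤ specNorm A * frobNorm B := by
  have hcol (j : Fin c) :
      ‖WithLp.toLp 2 ((A * B)ᵀ j)‖ ≤ specNorm A * ‖WithLp.toLp 2 (Bᵀ j)‖ :=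
    (LinearMap.toContinuousLinearMap (toEuclideanLin A)).le_opNorm (WithLp.toLp 2 (Bᵀ j))
  have hsq : frobSqC (A * B) ≤ specNorm A ^ 2 * frobSqC B := by
    rw [frobSqC_eq_sum_norm_sq_col, frobSqC_eq_sum_norm_sq_col, Finset.mul_sum]
    gcongr with j
    rw [← mul_pow]
    exact pow_le_pow_left₀ (norm_nonneg _) (hcol j) 2
  calc frobNorm (A * B) ≤ √(specNorm A ^ 2 * frobSqC B) := Real.sqrt_le_sqrt hsq
    _ = specNorm A * frobNorm B := by
      rw [Real.sqrt_mul (sq_nonneg _), Real.sqrt_sq (specNorm_nonneg A)]; rfl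

lemma frobNorm_neg (M : Matrix (Fin a) (Fin b) ℂ) : frobNorm (-M) = frobNorm M := by
  simp only [frobNorm, frobSqC, Matrix.neg_apply, norm_neg]

lemma frobNorm_conjTranspose (M : Matrix (Fin a) (Fin b) ℂ) : frobNorm Mᴴ = frobNorm M := by
  simp only [frobNorm, frobSqC, conjTranspose_apply, norm_star]
  rw [Finset.sum_comm]

lemma specNorm_conjTranspose (M : Matrix (Fin a) (Fin b) ℂ) : specNorm Mᴴ = specNorm M :=
  open scoped Matrix.Norms.L2Operator in l2_opNorm_conjTranspose M

lemma frobNorm_mul_le_mul_specNorm (B : Matrix (Fin a) (Fin b) ℂ)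
    (A : Matrix (Fin b) (Fin c) ℂ) :
    frobNorm (B * A) ≤ frobNorm B * specNorm A := by
  rw [← frobNorm_conjTranspose, conjTranspose_mul, ← frobNorm_conjTranspose B,
    ← specNorm_conjTranspose A, mul_comm]
  exact frobNorm_mul_le_specNorm_mul _ _

end FrobeniusSpectral

section Gradients

variable {α : Type*} [CommRing α] [Star α] {m n o : Type*} [Fintype m] [Fintype n]

-- `∇_X h` and `∇_Y h` for `h(X,Y) = ½(‖XY−W‖_F² + ρ‖HXY‖_F²)`, with `K = HᵀH`.
def gradX [Fintype o] (K : Matrix m m α) (ρ : α) (W : Matrix m o α) (X : Matrix m n α)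
    (Y : Matrix n o α) : Matrix m n α :=
  (X * Y - W) * Yᴴ + ρ • (K * X * Y * Yᴴ)

def gradY (K : Matrix m m α) (ρ : α) (W : Matrix m o α) (X : Matrix m n α)
    (Y : Matrix n o α) : Matrix n o α :=
  Xᴴ * (X * Y - W) + ρ • (Xᴴ * K * X * Y)

variable [DecidableEq m]

lemma gradX_sub_gradX_add [Fintype o] (K : Matrix m m α) (ρ : α) (W : Matrix m o α)
    (X ΔX : Matrix m n α) (Y : Matrix n o α) :
    gradX K ρ W X Y - gradX K ρ W (X + ΔX) Y = -((1 + ρ • K) * ΔX * (Y * Yᴴ)) := by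
  simp only [gradX, Matrix.add_mul, Matrix.mul_add, Matrix.sub_mul, Matrix.smul_mul,
    Matrix.mul_assoc, Matrix.one_mul, smul_add]
  abel

lemma gradY_sub_gradY_add (K : Matrix m m α) (ρ : α) (W : Matrix m o α) (X : Matrix m n α)
    (Y ΔY : Matrix n o α) :
    gradY K ρ W X Y - gradY K ρ W X (Y + ΔY) = -(Xᴴ * (1 + ρ • K) * X * ΔY) := by
  simp only [gradY, Matrix.add_mul, Matrix.mul_add, Matrix.mul_sub, Matrix.smul_mul,
    Matrix.mul_smul, Matrix.mul_assoc, Matrix.mul_one, smul_add]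
  abel

end Gradients

section Lipschitz

variable {m n o : ℕ} (K : Matrix (Fin m) (Fin m) ℂ) (ρ : ℂ) (W : Matrix (Fin m) (Fin o) ℂ)

lemma frobNorm_gradX_sub_gradX_add_le (X ΔX : Matrix (Fin m) (Fin n) ℂ)
    (Y : Matrix (Fin n) (Fin o) ℂ) :
    frobNorm (gradX K ρ W X Y - gradX K ρ W (X + ΔX) Y) ≤
      specNorm (1 + ρ • K) * specNorm (Y * Yᴴ) * frobNorm ΔX := by
  rw [gradX_sub_gradX_add, frobNorm_neg, mul_right_comm]
  calc frobNorm ((1 + ρ • K) * ΔX * (Y * Yᴴ))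
      ≤ frobNorm ((1 + ρ • K) * ΔX) * specNorm (Y * Yᴴ) := frobNorm_mul_le_mul_specNorm _ _
    _ ≤ specNorm (1 + ρ • K) * frobNorm ΔX * specNorm (Y * Yᴴ) := by
      gcongr
      · exact specNorm_nonneg _
      · exact frobNorm_mul_le_specNorm_mul _ _

lemma frobNorm_gradY_sub_gradY_add_le (X : Matrix (Fin m) (Fin n) ℂ)
    (Y ΔY : Matrix (Fin n) (Fin o) ℂ) :
    frobNorm (gradY K ρ W X Y - gradY K ρ W X (Y + ΔY)) ≤
      specNorm (Xᴴ * (1 + ρ • K) * X) * frobNorm ΔY := by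
  rw [gradY_sub_gradY_add, frobNorm_neg]
  exact frobNorm_mul_le_specNorm_mul _ _

end Lipschitz

theorem partial_gradients_lipschitz_general (m1 m2 r p : ℕ)
    (ρ1 : ℝ)
    (H : Matrix (Fin p) (Fin m1) ℝ)
    (W : Matrix (Fin m1) (Fin m2) ℂ) :
    ∀ (X ΔX : Matrix (Fin m1) (Fin r) ℂ) (Y ΔY : Matrix (Fin r) (Fin m2) ℂ),
      (frobNorm
          (((X * Y - W) * Yᴴ + (ρ1 : ℂ) • (((Hᵀ * H).map Complex.ofReal) * X * Y * Yᴴ)) -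
            (((X + ΔX) * Y - W) * Yᴴ +
              (ρ1 : ℂ) • (((Hᵀ * H).map Complex.ofReal) * (X + ΔX) * Y * Yᴴ))) ≤
        specNorm ((1 : Matrix (Fin m1) (Fin m1) ℂ) +
            (ρ1 : ℂ) • ((Hᵀ * H).map Complex.ofReal)) *
          specNorm (Y * Yᴴ) * frobNorm ΔX) ∧
      (frobNorm
          ((Xᴴ * (X * Y - W) + (ρ1 : ℂ) • (Xᴴ * ((Hᵀ * H).map Complex.ofReal) * X * Y)) -
            (Xᴴ * (X * (Y + ΔY) - W) +
              (ρ1 : ℂ) • (Xᴴ * ((Hᵀ * H).map Complex.ofReal) * X * (Y + ΔY)))) ≤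
        specNorm (Xᴴ * ((1 : Matrix (Fin m1) (Fin m1) ℂ) +
            (ρ1 : ℂ) • ((Hᵀ * H).map Complex.ofReal)) * X) * frobNorm ΔY) :=
  fun X ΔX Y ΔY =>
    ⟨frobNorm_gradX_sub_gradX_add_le _ _ W X ΔX Y, frobNorm_gradY_sub_gradY_add_le _ _ W X Y ΔY⟩

/-- the partial gradients of
`h(X,Y) = ½(‖XY−W‖_F² + ρ1‖HXY‖_F²)` are Lipschitz in each block. -/
theorem partial_gradients_lipschitz (m1 m2 r p : ℕ)
    (hm1 : 0 < m1) (hm2 : 0 < m2) (hr : 0 < r) (hp : 0 < p)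
    (ρ1 : ℝ) (hρ1 : 0 ≤ ρ1)
    (H : Matrix (Fin p) (Fin m1) ℝ)
    (W : Matrix (Fin m1) (Fin m2) ℂ) :
    ∀ (X ΔX : Matrix (Fin m1) (Fin r) ℂ) (Y ΔY : Matrix (Fin r) (Fin m2) ℂ),
      (frobNorm
          (((X * Y - W) * Yᴴ + (ρ1 : ℂ) • (((Hᵀ * H).map Complex.ofReal) * X * Y * Yᴴ)) -
            (((X + ΔX) * Y - W) * Yᴴ +
              (ρ1 : ℂ) • (((Hᵀ * H).map Complex.ofReal) * (X + ΔX) * Y * Yᴴ))) ≤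
        specNorm ((1 : Matrix (Fin m1) (Fin m1) ℂ) +
            (ρ1 : ℂ) • ((Hᵀ * H).map Complex.ofReal)) *
          specNorm (Y * Yᴴ) * frobNorm ΔX) ∧
      (frobNorm
          ((Xᴴ * (X * Y - W) + (ρ1 : ℂ) • (Xᴴ * ((Hᵀ * H).map Complex.ofReal) * X * Y)) -
            (Xᴴ * (X * (Y + ΔY) - W) +
              (ρ1 : ℂ) • (Xᴴ * ((Hᵀ * H).map Complex.ofReal) * X * (Y + ΔY)))) ≤
        specNorm (Xᴴ * ((1 : Matrix (Fin m1) (Fin m1) ℂ) +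
            (ρ1 : ℂ) • ((Hᵀ * H).map Complex.ofReal)) * X) * frobNorm ΔY) :=
  partial_gradients_lipschitz_general m1 m2 r p ρ1 H W
end
end

section
/- Let m1, m2, m3, r be positive integers and let Ã_1, …, Ã_{m3} be complex m1×m2 matrices such that rank(Ã_k) ≤ r for all k, Ã_1 has real entries, and Ã_k equals the entrywise complex conjugate of Ã_{m3−k+2} for every k ∈ {2,…,m3}. Then there exist complex matrices X̃_1, …, X̃_{m3} ∈ ℂ^{m1×r} and Ỹ_1, …, Ỹ_{m3} ∈ ℂ^{r×m2} such that Ã_k = X̃_k Ỹ_k for all k, X̃_1 and Ỹ_1 have real entries, and X̃_k (resp. Ỹ_k) equals the entrywise complex conjugate of X̃_{m3−k+2} (resp. Ỹ_{m3−k+2}) for every k ∈ {2,…,m3}. -/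
/-!
A matrix of rank at most `r` factors through `Fin r → K`, and a real matrix keeps its rank when
viewed over `ℂ`, so conjugation-fixed (i.e. real) slices admit real factors. For the other slices,
factor `Ã_k` freely on one half of the orbits `{k, -k}` of negation and conjugate the factors to
get those of `Ã_{-k} = conj Ã_k`; the slices with `k = -k` are real.
-/

open ComplexConjugate

theorem Matrix.exists_eq_mul_of_rank_le {K m n : Type*} [Field K] [Fintype m] [Fintype n]
    {r : ℕ} (A : Matrix m n K) (hA : A.rank ≤ r) :
    ∃ (X : Matrix m (Fin r) K) (Y : Matrix (Fin r) n K), A = X * Y := by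
  classical
  set W := LinearMap.range A.mulVecLin
  let g : (Fin r → K) →ₗ[K] W :=
    (Module.finBasis K W).equivFun.symm.toLinearMap ∘ₗ LinearMap.funLeft K K (Fin.castLE hA)
  have hg : Function.Surjective g :=
    (Module.finBasis K W).equivFun.symm.surjective.comp
      (LinearMap.funLeft_surjective_of_injective K K _ (Fin.castLE_injective hA))
  obtain ⟨h, hgh⟩ := Module.projective_lifting_property g A.mulVecLin.rangeRestrict hg
  refine ⟨LinearMap.toMatrix' (W.subtype ∘ₗ g), LinearMap.toMatrix' h, ?_⟩
  rw [← LinearMap.toMatrix'_comp, LinearMap.comp_assoc, hgh, LinearMap.subtype_comp_codRestrict,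
    ← Matrix.toLin'_apply', LinearMap.toMatrix'_toLin']

theorem Matrix.rank_le_rank_map_algebraMap {K L m n : Type*} [Field K] [Field L] [Algebra K L]
    [Fintype m] [Fintype n] (B : Matrix m n K) :
    B.rank ≤ (B.map (algebraMap K L)).rank := by
  let W := LinearMap.range B.mulVecLin
  let b := Module.finBasis K W
  have hb : LinearIndependent K fun s ↦ (b s : m → K) :=
    b.linearIndependent.map' W.subtype W.ker_subtype
  replace hb := (linearIndependent_algebraMap_comp_iff (S := L)).mpr hb
  have hspan : Submodule.span L (Set.range fun s ↦ algebraMap K L ∘ (b s : m → K)) ≤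
      LinearMap.range (B.map (algebraMap K L)).mulVecLin := by
    rw [Submodule.span_le]
    rintro _ ⟨s, rfl⟩
    obtain ⟨v, hv⟩ := (b s).2
    refine ⟨algebraMap K L ∘ v, ?_⟩
    show _ = algebraMap K L ∘ (b s : m → K)
    rw [← hv]
    ext i
    exact ((algebraMap K L).map_mulVec B v i).symm
  calc B.rank = Fintype.card (Fin B.rank) := (Fintype.card_fin _).symm
    _ = _ := (finrank_span_eq_card hb).symm
    _ ≤ _ := Submodule.finrank_mono hspan

section ComplexMatrix

variable {m n : Type*}

theorem Matrix.map_conj_involutive : Function.Involutive fun M : Matrix m n ℂ ↦ M.map conj := by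
  intro M
  ext i j
  simp

theorem Matrix.map_conj_eq_self_iff (M : Matrix m n ℂ) :
    M.map conj = M ↔ ∀ i j, (M i j).im = 0 := by
  simp only [← Matrix.ext_iff, Matrix.map_apply, Complex.conj_eq_iff_im]

variable [Fintype m] [Fintype n] {r : ℕ}

theorem Matrix.exists_eq_mul_map_conj_eq_self_of_rank_le (A : Matrix m n ℂ) (hA : A.rank ≤ r)
    (hreal : A.map conj = A) :
    ∃ (X : Matrix m (Fin r) ℂ) (Y : Matrix (Fin r) n ℂ),
      A = X * Y ∧ X.map conj = X ∧ Y.map conj = Y := by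
  have hB : (A.map Complex.re).map (algebraMap ℝ ℂ) = A := by
    ext i j
    exact Complex.conj_eq_iff_re.mp (congrFun (congrFun hreal i) j)
  obtain ⟨X, Y, hXY⟩ := (A.map Complex.re).exists_eq_mul_of_rank_le
    ((rank_le_rank_map_algebraMap _).trans (hB ▸ hA))
  refine ⟨X.map (algebraMap ℝ ℂ), Y.map (algebraMap ℝ ℂ), ?_, ?_, ?_⟩
  · rw [← Matrix.map_mul, ← hXY, hB]
  all_goals ext i j; simp

theorem Matrix.exists_eq_mul_of_rank_le_map_conj_eq_self_imp (A : Matrix m n ℂ) (hA : A.rank ≤ r) :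
    ∃ (X : Matrix m (Fin r) ℂ) (Y : Matrix (Fin r) n ℂ),
      A = X * Y ∧ (A.map conj = A → X.map conj = X ∧ Y.map conj = Y) := by
  by_cases hreal : A.map conj = A
  · obtain ⟨X, Y, hXY, hX, hY⟩ := A.exists_eq_mul_map_conj_eq_self_of_rank_le hA hreal
    exact ⟨X, Y, hXY, fun _ ↦ ⟨hX, hY⟩⟩
  · obtain ⟨X, Y, hXY⟩ := A.exists_eq_mul_of_rank_le hA
    exact ⟨X, Y, hXY, fun h ↦ absurd h hreal⟩

end ComplexMatrix

section NegSymmetrize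

variable {ι β : Type*} [InvolutiveNeg ι] [LinearOrder ι]

def negSymmetrize (σ : β → β) (g : ι → β) (k : ι) : β :=
  if k ≤ -k then g k else σ (g (-k))

theorem negSymmetrize_eq_apply_neg {σ : β → β} (hσ : Function.Involutive σ) {g : ι → β}
    (hfix : ∀ k, -k = k → σ (g k) = g k) (k : ι) :
    negSymmetrize σ g k = σ (negSymmetrize σ g (-k)) := by
  unfold negSymmetrize
  simp only [neg_neg]
  split_ifs with hk hk' hk'
  · have hk_neg : -k = k := le_antisymm hk' hk
    rw [hk_neg, hfix k hk_neg]
  · rw [hσ]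
  · rfl
  · exact absurd (le_total k (-k)) (not_or.mpr ⟨hk, hk'⟩)

theorem eq_negSymmetrize_mul_negSymmetrize {l m n : Type*} [Fintype m]
    {A : ι → Matrix l n ℂ} {X : ι → Matrix l m ℂ} {Y : ι → Matrix m n ℂ}
    (hA : ∀ k, A k = (A (-k)).map conj) (hXY : ∀ k, A k = X k * Y k) (k : ι) :
    A k = negSymmetrize (·.map conj) X k * negSymmetrize (·.map conj) Y k := by
  unfold negSymmetrize
  split_ifs
  · exact hXY k
  · rw [← Matrix.map_mul, ← hXY, ← hA]

end NegSymmetrize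

theorem conj_symmetric_low_rank_factorization_general (m1 m2 m3 r : ℕ)
    (hm3 : 0 < m3)
    (tA : Fin m3 → Matrix (Fin m1) (Fin m2) ℂ)
    (hrank : ∀ k, (tA k).rank ≤ r)
    (hreal : ∀ (i : Fin m1) (j : Fin m2), (tA ⟨0, hm3⟩ i j).im = 0)
    (hconj : ∀ k : Fin m3, k ≠ ⟨0, hm3⟩ → tA k = (tA (-k)).map (starRingEnd ℂ)) :
    ∃ (tX : Fin m3 → Matrix (Fin m1) (Fin r) ℂ)
      (tY : Fin m3 → Matrix (Fin r) (Fin m2) ℂ),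
      (∀ k, tA k = tX k * tY k) ∧
      (∀ (i : Fin m1) (j : Fin r), (tX ⟨0, hm3⟩ i j).im = 0) ∧
      (∀ (i : Fin r) (j : Fin m2), (tY ⟨0, hm3⟩ i j).im = 0) ∧
      (∀ k : Fin m3, k ≠ ⟨0, hm3⟩ → tX k = (tX (-k)).map (starRingEnd ℂ)) ∧
      (∀ k : Fin m3, k ≠ ⟨0, hm3⟩ → tY k = (tY (-k)).map (starRingEnd ℂ)) := by
  have : NeZero m3 := ⟨hm3.ne'⟩
  have hneg_zero : -(⟨0, hm3⟩ : Fin m3) = ⟨0, hm3⟩ := neg_zero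
  have hsym : ∀ k, tA k = (tA (-k)).map conj := by
    intro k
    by_cases hk : k = ⟨0, hm3⟩
    · rw [hk, hneg_zero, ((tA _).map_conj_eq_self_iff).mpr hreal]
    · exact hconj k hk
  have hfix : ∀ k, -k = k → (tA k).map conj = tA k := fun k hk ↦ by
    conv_rhs => rw [hsym k, hk]
  choose X Y hXY hXYfix using fun k ↦ (tA k).exists_eq_mul_of_rank_le_map_conj_eq_self_imp (hrank k)
  have hX := negSymmetrize_eq_apply_neg Matrix.map_conj_involutive
    (fun k hk ↦ (hXYfix k (hfix k hk)).1)
  have hY := negSymmetrize_eq_apply_neg Matrix.map_conj_involutive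
    (fun k hk ↦ (hXYfix k (hfix k hk)).2)
  refine ⟨_, _, eq_negSymmetrize_mul_negSymmetrize hsym hXY, ?_, ?_, fun k _ ↦ hX k,
    fun k _ ↦ hY k⟩
  · rw [← Matrix.map_conj_eq_self_iff]
    conv_rhs => rw [hX, hneg_zero]
  · rw [← Matrix.map_conj_eq_self_iff]
    conv_rhs => rw [hY, hneg_zero]

/-- a conjugate-symmetric family of complex matrices of rank at most `r`
admits a slice-wise rank-`r` factorization which is itself conjugate-symmetric
(the slice-wise form of the t-product factorization of a tensor of tubal rank ≤ r). -/
theorem conj_symmetric_low_rank_factorization (m1 m2 m3 r : ℕ)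
    (hm1 : 0 < m1) (hm2 : 0 < m2) (hm3 : 0 < m3) (hr : 0 < r)
    (tA : Fin m3 → Matrix (Fin m1) (Fin m2) ℂ)
    (hrank : ∀ k, (tA k).rank ≤ r)
    (hreal : ∀ (i : Fin m1) (j : Fin m2), (tA ⟨0, hm3⟩ i j).im = 0)
    (hconj : ∀ k : Fin m3, k ≠ ⟨0, hm3⟩ → tA k = (tA (-k)).map (starRingEnd ℂ)) :
    ∃ (tX : Fin m3 → Matrix (Fin m1) (Fin r) ℂ)
      (tY : Fin m3 → Matrix (Fin r) (Fin m2) ℂ),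
      (∀ k, tA k = tX k * tY k) ∧
      (∀ (i : Fin m1) (j : Fin r), (tX ⟨0, hm3⟩ i j).im = 0) ∧
      (∀ (i : Fin r) (j : Fin m2), (tY ⟨0, hm3⟩ i j).im = 0) ∧
      (∀ k : Fin m3, k ≠ ⟨0, hm3⟩ → tX k = (tX (-k)).map (starRingEnd ℂ)) ∧
      (∀ k : Fin m3, k ≠ ⟨0, hm3⟩ → tY k = (tY (-k)).map (starRingEnd ℂ)) :=
  conj_symmetric_low_rank_factorization_general m1 m2 m3 r hm3 tA hrank hreal hconj
end
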